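/- arXiv:0801.3624 — 4 statements merged into one kernel-verified Lean document; each statement's English description precedes it below -/
import Mathlib

section
/- (Iterated Cauchy–Schwarz / BNS step.) Let k ≥ 2, ℓ, m ≥ 1 be integers, n = ℓ^{k−1}m, f : {0,1}^m → {−1,1}, μ a probability distribution on {0,1}^m, and λ the probability distribution on {0,1}^n × ([ℓ]^m)^{k−1} given by λ(x, S^1,…,S^{k−1}) = μ(x ← S^1,…,S^{k−1})/(ℓ^{m(k−1)} 2^{n−m}). Then for every cylinder intersection φ on the k-fold product {0,1}^n × [ℓ]^m × ⋯ × [ℓ]^m, (disc^φ_{k,λ}(F^f_k))^{2^{k−1}} ≤ 2^{2^{k−1}m} · E[H^f_k(S^1_0, S^1_1, …, S^{k−1}_0, S^{k−1}_1)], where the expectation is over S^1_0, S^1_1, …, S^{k−1}_0, S^{k−1}_1 chosen independently and uniformly at random from [ℓ]^m. -/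
open scoped BigOperators

/-- `x ← S^1,…,S^{K}`: with `x ∈ {0,1}^n` (`n = ℓ^K·m`) viewed as `m` blocks, each a
`K`-dimensional array of side `ℓ`, the `α`-th bit of the result is
`x[α][S^1[α],…,S^K[α]]`. -/
def mask {K ℓ m : ℕ} (x : Fin m → (Fin K → Fin ℓ) → Bool)
    (S : Fin K → Fin m → Fin ℓ) : Fin m → Bool :=
  fun α => x α (fun i => S i α)

/-- The masked function `F^f_k (x, S^1,…,S^{k-1}) = f(x ← S^1,…,S^{k-1})`. -/
def Ffun {K ℓ m : ℕ} (f : (Fin m → Bool) → ℝ)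
    (p : (Fin m → (Fin K → Fin ℓ) → Bool) × (Fin K → Fin m → Fin ℓ)) : ℝ :=
  f (mask p.1 p.2)

/-- A probability distribution on a finite set. -/
def IsProbDist {D : Type*} [Fintype D] (μ : D → ℝ) : Prop :=
  (∀ x, 0 ≤ μ x) ∧ ∑ x, μ x = 1

/-- The distribution `λ(x,S^1,…,S^{k-1}) = μ(x ← S^1,…,S^{k-1}) / (ℓ^{m(k-1)} 2^{n-m})`. -/
noncomputable def lamDist (k ℓ m n : ℕ) (μ : (Fin m → Bool) → ℝ)
    (p : (Fin m → (Fin (k - 1) → Fin ℓ) → Bool) × (Fin (k - 1) → Fin m → Fin ℓ)) : ℝ :=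
  μ (mask p.1 p.2) / ((ℓ : ℝ) ^ (m * (k - 1)) * 2 ^ (n - m))

/-- A cylinder intersection on the `k`-party domain `{0,1}^n × ([ℓ]^m)^{k-1}`
(one player holds `x`, and one player holds each `S^i`): a conjunction of a cylinder
not depending on `x` and, for each `i`, a cylinder not depending on `S^i`. -/
def IsCylinderIntersection {X V : Type*} {K : ℕ}
    (φ : X × (Fin K → V) → Bool) : Prop :=
  ∃ (ψ₀ : X × (Fin K → V) → Bool) (ψ : Fin K → X × (Fin K → V) → Bool),
    (∀ x x' S, ψ₀ (x, S) = ψ₀ (x', S)) ∧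
    (∀ i x S S', (∀ j, j ≠ i → S j = S' j) → ψ i (x, S) = ψ i (x, S')) ∧
    (∀ p, φ p = (ψ₀ p && decide (∀ i, ψ i p = true)))

/-- Interpret a boolean as the real `0` or `1`. -/
noncomputable def bval (b : Bool) : ℝ := if b then 1 else 0

/-- `disc^φ_{k,λ}(F) = |E_{y∼λ}[F(y)φ(y)]|`. -/
noncomputable def discPhi {D : Type*} [Fintype D] (lam : D → ℝ) (F : D → ℝ)
    (φ : D → Bool) : ℝ :=
  |∑ y, lam y * F y * bval (φ y)|

/-- `disc_{k,λ}(F)`: the supremum of `disc^φ_{k,λ}(F)` over cylinder intersections `φ`. -/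
noncomputable def disc {X V : Type*} [Fintype X] [Fintype V] {K : ℕ}
    (lam : X × (Fin K → V) → ℝ) (F : X × (Fin K → V) → ℝ) : ℝ :=
  sSup { t | ∃ φ, IsCylinderIntersection φ ∧ t = discPhi lam F φ }

/-- The character `χ_S(x) = (-1)^{Σ_{i∈S} x_i}`. -/
noncomputable def chiChar {m : ℕ} (S : Finset (Fin m)) (z : Fin m → Bool) : ℝ :=
  ∏ i ∈ S, (if z i then (-1 : ℝ) else 1)

/-- `f` is `(μ,d)`-orthogonal: `E_{x∼μ}[f(x)χ_S(x)] = 0` for every `S` with `|S| < d`. -/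
def Orthogonal {m : ℕ} (μ : (Fin m → Bool) → ℝ) (d : ℕ) (f : (Fin m → Bool) → ℝ) : Prop :=
  ∀ S : Finset (Fin m), S.card < d → ∑ z, μ z * f z * chiChar S z = 0

/-- `H^f_k(S^1_0,S^1_1,…,S^{k-1}_0,S^{k-1}_1)`: the absolute value of the expectation,
over `x` uniform on `{0,1}^n` (`n = ℓ^{k-1}m`), of
`∏_{u ∈ {0,1}^{k-1}} f(x ← S^1_{u_1},…,S^{k-1}_{u_{k-1}}) μ(x ← S^1_{u_1},…,S^{k-1}_{u_{k-1}})`. -/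
noncomputable def Hfun (k ℓ m : ℕ) (f μ : (Fin m → Bool) → ℝ)
    (S0 S1 : Fin (k - 1) → Fin m → Fin ℓ) : ℝ :=
  |(∑ x : Fin m → (Fin (k - 1) → Fin ℓ) → Bool,
      ∏ u : Fin (k - 1) → Bool,
        f (mask x (fun i => if u i then S1 i else S0 i)) *
          μ (mask x (fun i => if u i then S1 i else S0 i))) /
    (2 : ℝ) ^ (ℓ ^ (k - 1) * m)|

/-!
After rescaling, `disc^φ` is `2^m` times `|𝔼_{x,S} F(x,S) ψ₀(S) ∏ᵢ ψᵢ(x,S)|` with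
`F = (f μ) ∘ mask`, and `𝔼[H^f_k]` is `𝔼_{S⁰,S¹} |𝔼_x ∏_{u ∈ {0,1}^K} F(x, S^u)|`, `K = k - 1`.
The comparison is proved by induction on `K`. The cylinder that ignores the first coordinate `s`
of `S = (s, T)` factors out of the average over `s`, and Cauchy–Schwarz over `(x, T)` removes it;
squaring what remains duplicates `s` into a pair `(s⁰, s¹)`, which gives an instance with `K - 1`
coordinates for `F(x, (s⁰, T)) F(x, (s¹, T))`, and Jensen moves the power `2^(K-1)` inside the
average over `(s⁰, s¹)`. The cylinder `ψ₀`, which ignores `x`, has modulus at most `1` and can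
only decrease the right-hand side.
-/

open Finset

lemma abs_expect_pow_le {ι α : Type*} [Field α] [LinearOrder α] [IsStrictOrderedRing α]
    (s : Finset ι) (f : ι → α) {n : ℕ} (hn : n ≠ 0) :
    |𝔼 i ∈ s, f i| ^ n ≤ 𝔼 i ∈ s, |f i| ^ n := by
  obtain ⟨n, rfl⟩ := Nat.exists_eq_succ_of_ne_zero hn
  calc |𝔼 i ∈ s, f i| ^ (n + 1) ≤ (𝔼 i ∈ s, |f i|) ^ (n + 1) :=
        pow_le_pow_left₀ (abs_nonneg _) (abs_expect_le s f) _
    _ ≤ 𝔼 i ∈ s, |f i| ^ (n + 1) := by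
        simp only [expect_eq_sum_div_card, div_pow]
        obtain rfl | hs := s.eq_empty_or_nonempty
        · simp
        rw [pow_succ (#s : α) n, ← div_div]
        gcongr
        exact pow_sum_div_card_le_sum_pow (fun i _ => abs_nonneg (f i)) n

lemma abs_expect_expect_pow_le {ι κ α : Type*} [Field α] [LinearOrder α] [IsStrictOrderedRing α]
    (s : Finset ι) (t : Finset κ) (f : ι → κ → α) {n : ℕ} (hn : n ≠ 0) :
    |𝔼 i ∈ s, 𝔼 j ∈ t, f i j| ^ n ≤ 𝔼 i ∈ s, 𝔼 j ∈ t, |f i j| ^ n :=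
  (abs_expect_pow_le s _ hn).trans <| expect_le_expect fun _ _ => abs_expect_pow_le t _ hn

lemma expect_pi_fin_succ {V M : Type*} [Fintype V] [AddCommMonoid M] [Module ℚ≥0 M] {K : ℕ}
    (g : (Fin (K + 1) → V) → M) :
    𝔼 S, g S = 𝔼 s, 𝔼 T : Fin K → V, g (Fin.cons s T) := by
  rw [← Finset.expect_product' univ univ (fun s T => g (Fin.cons s T)), univ_product_univ]
  exact (Fintype.expect_equiv (Fin.consEquiv fun _ => V) _ _ fun _ => rfl).symm

lemma prod_pi_fin_succ {V M : Type*} [Fintype V] [CommMonoid M] {K : ℕ}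
    (g : (Fin (K + 1) → V) → M) :
    ∏ S, g S = ∏ s, ∏ T : Fin K → V, g (Fin.cons s T) := by
  rw [← Fintype.prod_prod_type']
  exact (Fintype.prod_equiv (Fin.consEquiv fun _ => V) _ _ fun _ => rfl).symm


section CylinderCorrelation

variable {X V : Type*} {K : ℕ}

def cubeVertex (S0 S1 : Fin K → V) (u : Fin K → Bool) : Fin K → V :=
  fun i => if u i then S1 i else S0 i

def IndependentOfCoord (i : Fin K) (g : X → (Fin K → V) → ℝ) : Prop :=
  ∀ x S S', (∀ j, j ≠ i → S j = S' j) → g x S = g x S'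

def doubleFirst (g : X → (Fin (K + 1) → V) → ℝ) (s0 s1 : V) : X → (Fin K → V) → ℝ :=
  fun x T => g x (Fin.cons s0 T) * g x (Fin.cons s1 T)

lemma cubeVertex_cons (s0 s1 : V) (T0 T1 : Fin K → V) (b : Bool) (u : Fin K → Bool) :
    cubeVertex (Fin.cons s0 T0) (Fin.cons s1 T1) (Fin.cons b u) =
      Fin.cons (if b then s1 else s0) (cubeVertex T0 T1 u) := by
  funext i
  refine Fin.cases ?_ (fun j => ?_) i <;> simp [cubeVertex]

lemma prod_cubeVertex_cons (F : X → (Fin (K + 1) → V) → ℝ) (s0 s1 : V) (T0 T1 : Fin K → V)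
    (x : X) :
    ∏ w, F x (cubeVertex (Fin.cons s0 T0) (Fin.cons s1 T1) w) =
      ∏ u, doubleFirst F s0 s1 x (cubeVertex T0 T1 u) := by
  simp only [prod_pi_fin_succ, cubeVertex_cons, Fintype.prod_bool, doubleFirst,
    ← prod_mul_distrib, mul_comm, if_true, Bool.false_eq_true, if_false]

lemma IndependentOfCoord.doubleFirst {j : Fin K} {g : X → (Fin (K + 1) → V) → ℝ}
    (hg : IndependentOfCoord j.succ g) (s0 s1 : V) :
    IndependentOfCoord j (doubleFirst g s0 s1) := by
  intro x T T' hT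
  have hcons : ∀ s : V, g x (Fin.cons s T) = g x (Fin.cons s T') := fun s =>
    hg x _ _ fun i hi => by
      cases i using Fin.cases with
      | zero => rfl
      | succ i => simpa using hT i fun h => hi (h ▸ rfl)
  simp only [_root_.doubleFirst, hcons]

lemma abs_doubleFirst_le_one {g : X → (Fin (K + 1) → V) → ℝ} (hg : ∀ x S, |g x S| ≤ 1)
    (s0 s1 : V) (x : X) (T : Fin K → V) : |doubleFirst g s0 s1 x T| ≤ 1 := by
  rw [_root_.doubleFirst, abs_mul]
  exact mul_le_one₀ (hg _ _) (abs_nonneg _) (hg _ _)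

variable [Fintype X] [Fintype V]

noncomputable def cylinderCorrelation (F : X → (Fin K → V) → ℝ)
    (χ : Fin K → X → (Fin K → V) → ℝ) : ℝ :=
  𝔼 x, 𝔼 S, F x S * ∏ i, χ i x S

noncomputable def cubeAvg (F : X → (Fin K → V) → ℝ) : ℝ :=
  𝔼 S0, 𝔼 S1, |𝔼 x, ∏ u, F x (cubeVertex S0 S1 u)|

noncomputable def avgFirst (F : X → (Fin (K + 1) → V) → ℝ)
    (χ : Fin (K + 1) → X → (Fin (K + 1) → V) → ℝ) (x : X) (T : Fin K → V) : ℝ :=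
  𝔼 s, F x (Fin.cons s T) * ∏ j : Fin K, χ j.succ x (Fin.cons s T)

lemma cubeAvg_mul_le (F : X → (Fin K → V) → ℝ) {c : (Fin K → V) → ℝ} (hc : ∀ S, |c S| ≤ 1) :
    cubeAvg (fun x S => F x S * c S) ≤ cubeAvg F := by
  refine expect_le_expect fun S0 _ => expect_le_expect fun S1 _ => ?_
  simp only [prod_mul_distrib, ← expect_mul, abs_mul]
  refine mul_le_of_le_one_right (abs_nonneg _) ?_
  rw [abs_prod]
  exact prod_le_one (fun _ _ => abs_nonneg _) fun _ _ => hc _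

lemma cubeAvg_eq_expect_cubeAvg_doubleFirst (F : X → (Fin (K + 1) → V) → ℝ) :
    cubeAvg F = 𝔼 s0, 𝔼 s1, cubeAvg (doubleFirst F s0 s1) := by
  simp only [cubeAvg, expect_pi_fin_succ, prod_cubeVertex_cons]
  exact expect_congr rfl fun s0 _ => expect_comm _ _ _

lemma cylinderCorrelation_eq_expect_avgFirst (F : X → (Fin (K + 1) → V) → ℝ)
    {χ : Fin (K + 1) → X → (Fin (K + 1) → V) → ℝ} (hχ : IndependentOfCoord 0 (χ 0)) (v : V) :
    cylinderCorrelation F χ = 𝔼 x, 𝔼 T, χ 0 x (Fin.cons v T) * avgFirst F χ x T := by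
  simp only [cylinderCorrelation, avgFirst, expect_pi_fin_succ, mul_expect, Fin.prod_univ_succ]
  refine expect_congr rfl fun x _ => (expect_comm _ _ _).trans <|
    expect_congr rfl fun T _ => expect_congr rfl fun s _ => ?_
  rw [hχ x (Fin.cons s T) (Fin.cons v T) fun j hj => ?_]
  · ring
  · cases j using Fin.cases with
    | zero => exact absurd rfl hj
    | succ j => rfl

lemma expect_avgFirst_sq (F : X → (Fin (K + 1) → V) → ℝ)
    (χ : Fin (K + 1) → X → (Fin (K + 1) → V) → ℝ) :
    𝔼 x, 𝔼 T, avgFirst F χ x T ^ 2 =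
      𝔼 s0, 𝔼 s1,
        cylinderCorrelation (doubleFirst F s0 s1) fun j => doubleFirst (χ j.succ) s0 s1 := by
  simp only [avgFirst, sq, expect_mul_expect, cylinderCorrelation, doubleFirst, prod_mul_distrib]
  calc _ = 𝔼 x, 𝔼 s0, 𝔼 s1, 𝔼 T : Fin K → V,
        F x (Fin.cons s0 T) * (∏ j : Fin K, χ j.succ x (Fin.cons s0 T)) *
          (F x (Fin.cons s1 T) * ∏ j : Fin K, χ j.succ x (Fin.cons s1 T)) :=
        expect_congr rfl fun x _ => (expect_comm _ _ _).trans <|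
          expect_congr rfl fun s0 _ => expect_comm _ _ _
    _ = _ := (expect_comm _ _ _).trans <| expect_congr rfl fun s0 _ =>
        (expect_comm _ _ _).trans <| expect_congr rfl fun s1 _ =>
          expect_congr rfl fun x _ => expect_congr rfl fun T _ => by ring

lemma sq_cylinderCorrelation_le (F : X → (Fin (K + 1) → V) → ℝ)
    {χ : Fin (K + 1) → X → (Fin (K + 1) → V) → ℝ} (hχ : IndependentOfCoord 0 (χ 0))
    (hχ_le : ∀ x S, |χ 0 x S| ≤ 1) :
    cylinderCorrelation F χ ^ 2 ≤ 𝔼 x, 𝔼 T, avgFirst F χ x T ^ 2 := by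
  rcases isEmpty_or_nonempty V with hV | ⟨⟨v⟩⟩
  · simp [cylinderCorrelation, avgFirst]
  calc cylinderCorrelation F χ ^ 2
      = |𝔼 x, 𝔼 T, χ 0 x (Fin.cons v T) * avgFirst F χ x T| ^ 2 := by
        rw [sq_abs, cylinderCorrelation_eq_expect_avgFirst F hχ v]
    _ ≤ 𝔼 x, 𝔼 T, |χ 0 x (Fin.cons v T) * avgFirst F χ x T| ^ 2 :=
        abs_expect_expect_pow_le _ _ _ two_ne_zero
    _ ≤ 𝔼 x, 𝔼 T, avgFirst F χ x T ^ 2 := by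
        refine expect_le_expect fun x _ => expect_le_expect fun T _ => ?_
        rw [abs_mul, mul_pow, sq_abs (avgFirst F χ x T)]
        exact mul_le_of_le_one_left (sq_nonneg _) (pow_le_one₀ (abs_nonneg _) (hχ_le _ _))

theorem abs_cylinderCorrelation_pow_le_cubeAvg : ∀ {K : ℕ} (F : X → (Fin K → V) → ℝ)
    {χ : Fin K → X → (Fin K → V) → ℝ}, (∀ i, IndependentOfCoord i (χ i)) →
    (∀ i x S, |χ i x S| ≤ 1) → |cylinderCorrelation F χ| ^ 2 ^ K ≤ cubeAvg F
  | 0, F, χ, _, _ => by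
    simp [cylinderCorrelation, cubeAvg, Subsingleton.elim (cubeVertex _ _ _) default]
  | K + 1, F, χ, hχ, hχ_le => by
    set D := 𝔼 s0, 𝔼 s1,
      cylinderCorrelation (doubleFirst F s0 s1) fun j => doubleFirst (χ j.succ) s0 s1
    have hsq : cylinderCorrelation F χ ^ 2 ≤ |D| :=
      (sq_cylinderCorrelation_le F (hχ 0) (hχ_le 0)).trans
        ((expect_avgFirst_sq F χ).trans_le (le_abs_self _))
    calc |cylinderCorrelation F χ| ^ 2 ^ (K + 1) = (cylinderCorrelation F χ ^ 2) ^ 2 ^ K := by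
          rw [pow_succ, pow_mul', sq_abs]
      _ ≤ |D| ^ 2 ^ K := pow_le_pow_left₀ (sq_nonneg _) hsq _
      _ ≤ 𝔼 s0, 𝔼 s1, |cylinderCorrelation (doubleFirst F s0 s1)
            fun j => doubleFirst (χ j.succ) s0 s1| ^ 2 ^ K :=
          abs_expect_expect_pow_le _ _ _ (pow_ne_zero _ two_ne_zero)
      _ ≤ 𝔼 s0, 𝔼 s1, cubeAvg (doubleFirst F s0 s1) := by
          gcongr with s0 _ s1 _
          exact abs_cylinderCorrelation_pow_le_cubeAvg _ (fun j => (hχ j.succ).doubleFirst s0 s1)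
            fun j => abs_doubleFirst_le_one (hχ_le j.succ) s0 s1
      _ = cubeAvg F := (cubeAvg_eq_expect_cubeAvg_doubleFirst F).symm

end CylinderCorrelation

lemma abs_bval_le_one (b : Bool) : |bval b| ≤ 1 := by cases b <;> simp [bval]

lemma bval_and_decide_forall {ι : Type*} [Fintype ι] (a : Bool) (b : ι → Bool)
    [Decidable (∀ i, b i = true)] :
    bval (a && decide (∀ i, b i = true)) = bval a * ∏ i, bval (b i) := by
  by_cases h : ∀ i, b i = true
  · simp [bval, h]
  · obtain ⟨i, hi⟩ := not_forall.mp h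
    rw [prod_eq_zero (mem_univ i) (by simp [bval, hi])]
    simp [bval, h]

lemma cubeAvg_mask_eq (k ℓ m : ℕ) (f μ : (Fin m → Bool) → ℝ) :
    cubeAvg (fun (x : Fin m → (Fin (k - 1) → Fin ℓ) → Bool) S => f (mask x S) * μ (mask x S)) =
      (∑ S0 : Fin (k - 1) → Fin m → Fin ℓ, ∑ S1 : Fin (k - 1) → Fin m → Fin ℓ,
        Hfun k ℓ m f μ S0 S1) / (ℓ : ℝ) ^ (2 * ((k - 1) * m)) := by
  simp only [cubeAvg, Hfun, Fintype.expect_eq_sum_div_card, sum_div, div_div, Fintype.card_fun,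
    Fintype.card_bool, Fintype.card_fin, Nat.cast_pow, Nat.cast_ofNat, ← pow_mul, ← pow_add]
  rw [show m * (k - 1) + m * (k - 1) = 2 * ((k - 1) * m) by ring]
  rfl

lemma discPhi_lamDist_eq {k ℓ m n : ℕ} (hℓ : 1 ≤ ℓ) (hn : n = ℓ ^ (k - 1) * m)
    (f μ : (Fin m → Bool) → ℝ)
    (φ : (Fin m → (Fin (k - 1) → Fin ℓ) → Bool) × (Fin (k - 1) → Fin m → Fin ℓ) → Bool) :
    discPhi (lamDist k ℓ m n μ) (Ffun f) φ =
      2 ^ m * |𝔼 x, 𝔼 S, f (mask x S) * μ (mask x S) * bval (φ (x, S))| := by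
  set g := fun x S => f (mask x S) * μ (mask x S) * bval (φ (x, S))
  have hmn : m ≤ n := hn ▸ Nat.le_mul_of_pos_left m (pow_pos hℓ _)
  have hcard : (Fintype.card (Fin m → (Fin (k - 1) → Fin ℓ) → Bool) : ℝ) *
      Fintype.card (Fin (k - 1) → Fin m → Fin ℓ) =
        2 ^ m * ((ℓ : ℝ) ^ (m * (k - 1)) * 2 ^ (n - m)) := by
    simp only [Fintype.card_fun, Fintype.card_bool, Fintype.card_fin, Nat.cast_pow, Nat.cast_ofNat,
      ← pow_mul, ← hn, mul_comm ((ℓ : ℝ) ^ _), ← mul_assoc, ← pow_add, Nat.add_sub_cancel' hmn]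
  calc discPhi (lamDist k ℓ m n μ) (Ffun f) φ
      = |(∑ x, ∑ S, g x S) / ((ℓ : ℝ) ^ (m * (k - 1)) * 2 ^ (n - m))| := by
        simp only [discPhi, Fintype.sum_prod_type, sum_div, lamDist, Ffun, g]
        congr 1
        refine sum_congr rfl fun x _ => sum_congr rfl fun S _ => ?_
        ring
    _ = |2 ^ m * 𝔼 x, 𝔼 S, g x S| := by
        simp only [Fintype.expect_eq_sum_div_card, ← sum_div, div_div]
        rw [mul_comm (Fintype.card (Fin (k - 1) → Fin m → Fin ℓ) : ℝ), hcard]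
        field_simp
    _ = 2 ^ m * |𝔼 x, 𝔼 S, g x S| := by rw [abs_mul, abs_of_pos (by positivity)]

theorem statement5_general (k ℓ m : ℕ) (hℓ : 1 ≤ ℓ)
    (n : ℕ) (hn : n = ℓ ^ (k - 1) * m)
    (f : (Fin m → Bool) → ℝ)
    (μ : (Fin m → Bool) → ℝ)
    (φ : (Fin m → (Fin (k - 1) → Fin ℓ) → Bool) × (Fin (k - 1) → Fin m → Fin ℓ) → Bool)
    (hφ : IsCylinderIntersection φ) :
    (discPhi (lamDist k ℓ m n μ) (Ffun f) φ) ^ (2 ^ (k - 1)) ≤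
      (2 : ℝ) ^ (2 ^ (k - 1) * m) *
        ((∑ S0 : Fin (k - 1) → Fin m → Fin ℓ, ∑ S1 : Fin (k - 1) → Fin m → Fin ℓ,
            Hfun k ℓ m f μ S0 S1) / (ℓ : ℝ) ^ (2 * ((k - 1) * m))) := by
  obtain ⟨ψ₀, ψ, hψ₀, hψ, hφψ⟩ := hφ
  set F := fun (x : Fin m → (Fin (k - 1) → Fin ℓ) → Bool) S => f (mask x S) * μ (mask x S)
  have hcorr : 𝔼 x, 𝔼 S, F x S * bval (φ (x, S)) = cylinderCorrelation
      (fun x S => F x S * bval (ψ₀ (default, S))) (fun i x S => bval (ψ i (x, S))) := by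
    simp only [cylinderCorrelation, hφψ, bval_and_decide_forall, hψ₀ _ default, mul_assoc]
  rw [discPhi_lamDist_eq hℓ hn, hcorr, mul_pow, ← pow_mul, mul_comm m, ← cubeAvg_mask_eq]
  gcongr
  calc _ ≤ cubeAvg (fun x S => F x S * bval (ψ₀ (default, S))) :=
        abs_cylinderCorrelation_pow_le_cubeAvg _ (fun i x S S' h => by simp only [hψ i x S S' h])
          fun _ _ _ => abs_bval_le_one _
    _ ≤ cubeAvg F := cubeAvg_mul_le F fun _ => abs_bval_le_one _

/-- Iterated Cauchy–Schwarz / BNS step: for every cylinder intersection `φ`,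
`(disc^φ_{k,λ}(F^f_k))^{2^{k-1}} ≤ 2^{2^{k-1}m} · E[H^f_k(S^1_0,S^1_1,…,S^{k-1}_0,S^{k-1}_1)]`,
the expectation over the `2(k-1)` vectors chosen independently and uniformly in `[ℓ]^m`. -/
theorem statement5 (k ℓ m : ℕ) (hk : 2 ≤ k) (hℓ : 1 ≤ ℓ) (hm : 1 ≤ m)
    (n : ℕ) (hn : n = ℓ ^ (k - 1) * m)
    (f : (Fin m → Bool) → ℝ) (hf : ∀ z, f z = 1 ∨ f z = -1)
    (μ : (Fin m → Bool) → ℝ) (hμ : IsProbDist μ)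
    (φ : (Fin m → (Fin (k - 1) → Fin ℓ) → Bool) × (Fin (k - 1) → Fin m → Fin ℓ) → Bool)
    (hφ : IsCylinderIntersection φ) :
    (discPhi (lamDist k ℓ m n μ) (Ffun f) φ) ^ (2 ^ (k - 1)) ≤
      (2 : ℝ) ^ (2 ^ (k - 1) * m) *
        ((∑ S0 : Fin (k - 1) → Fin m → Fin ℓ, ∑ S1 : Fin (k - 1) → Fin m → Fin ℓ,
            Hfun k ℓ m f μ S0 S1) / (ℓ : ℝ) ^ (2 * ((k - 1) * m))) :=
  statement5_general k ℓ m hℓ n hn f μ φ hφ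
end

section
/- (Claim 1.) Let k ≥ 2, ℓ, m ≥ 1, d ≥ 1 be integers, n = ℓ^{k−1}m, μ a probability distribution on {0,1}^m, and f : {0,1}^m → {−1,1} a (μ,d)-orthogonal function. Then for all S^1_0, S^1_1, …, S^{k−1}_0, S^{k−1}_1 ∈ [ℓ]^m with r < d, H^f_k(S^1_0, S^1_1, …, S^{k−1}_0, S^{k−1}_1) = 0, where r_i = |{α ∈ [m] : S^i_0[α] = S^i_1[α]}| and r = r_1 + ⋯ + r_{k−1}. -/
/-!
Expand each factor `f·μ` of `H` in the characters `χ_T` of `{0,1}^m`. A term of the expansion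
in which some character has degree `< d` carries a vanishing coefficient by orthogonality.
Otherwise the character at the corner `u = 0` has degree `≥ d > r`, so it involves a coordinate
`α` at which `S^i_0[α] ≠ S^i_1[α]` for every `i`; flipping the bit of `x` in block `α` at the
cell `(S^1_0[α],…,S^{k-1}_0[α])` changes only that corner's bit, hence negates the term, and the
term averages to zero over `x`.
-/

open scoped BigOperators

open Finset

section Walsh

variable {m : ℕ}

noncomputable def walshCoeff (g : (Fin m → Bool) → ℝ) (T : Finset (Fin m)) : ℝ :=
  ∑ w, g w * chiChar T w

theorem sum_chiChar_mul_chiChar (w z : Fin m → Bool) :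
    ∑ T : Finset (Fin m), chiChar T w * chiChar T z = if w = z then 2 ^ m else 0 := by
  have hprod : ∀ T : Finset (Fin m), chiChar T w * chiChar T z =
      (∏ i ∈ T, (if w i then (-1 : ℝ) else 1) * (if z i then -1 else 1)) *
        ∏ _i ∈ univ \ T, (1 : ℝ) := by
    intro T
    rw [chiChar, chiChar, prod_mul_distrib, prod_const_one, mul_one]
  rw [sum_congr rfl fun T _ => hprod T, ← powerset_univ, ← prod_add]
  split_ifs with h
  · subst h
    have htwo : ∀ i, ((if w i then (-1 : ℝ) else 1) * (if w i then -1 else 1) + 1) = 2 := by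
      intro i; cases w i <;> norm_num
    simp only [htwo, prod_const, card_univ, Fintype.card_fin]
  · obtain ⟨i, hi⟩ : ∃ i, w i ≠ z i := Function.ne_iff.mp h
    apply prod_eq_zero (mem_univ i)
    cases hw : w i <;> cases hz : z i <;> simp_all

theorem sum_walshCoeff_mul_chiChar (g : (Fin m → Bool) → ℝ) (z : Fin m → Bool) :
    ∑ T, walshCoeff g T * chiChar T z = 2 ^ m * g z := by
  simp_rw [walshCoeff, sum_mul, mul_assoc]
  rw [sum_comm]
  simp_rw [← mul_sum, sum_chiChar_mul_chiChar, mul_ite, mul_zero, sum_ite_eq', mem_univ,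
    if_true, mul_comm]

theorem chiChar_update_not {T : Finset (Fin m)} {α : Fin m} (hα : α ∈ T) (z : Fin m → Bool) :
    chiChar T (Function.update z α (!z α)) = -chiChar T z := by
  rw [chiChar, chiChar, ← mul_prod_erase _ _ hα, ← mul_prod_erase _ _ hα,
    prod_congr rfl fun i hi => by rw [Function.update_of_ne (ne_of_mem_erase hi)],
    Function.update_self]
  cases z α <;> simp

theorem sum_prod_eq_zero_of_walshCoeff {ι X : Type*} [Fintype ι] [DecidableEq ι] [Fintype X]
    (g : (Fin m → Bool) → ℝ) (Z : ι → X → Fin m → Bool)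
    (h : ∀ p : ι → Finset (Fin m),
      (∃ u, walshCoeff g (p u) = 0) ∨ ∑ x, ∏ u, chiChar (p u) (Z u x) = 0) :
    ∑ x, ∏ u, g (Z u x) = 0 := by
  have hexpand : (2 ^ m) ^ Fintype.card ι * ∑ x, ∏ u, g (Z u x) =
      ∑ p : ι → Finset (Fin m), (∏ u, walshCoeff g (p u)) * ∑ x, ∏ u, chiChar (p u) (Z u x) :=
    calc (2 ^ m) ^ Fintype.card ι * ∑ x, ∏ u, g (Z u x)
        = ∑ x, ∏ u, ∑ T, walshCoeff g T * chiChar T (Z u x) := by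
          simp_rw [sum_walshCoeff_mul_chiChar, prod_mul_distrib, prod_const, card_univ, mul_sum]
      _ = _ := by
          simp_rw [Fintype.prod_sum, prod_mul_distrib, mul_sum]
          exact sum_comm
  have hzero : ∑ p : ι → Finset (Fin m),
      (∏ u, walshCoeff g (p u)) * ∑ x, ∏ u, chiChar (p u) (Z u x) = 0 := by
    refine sum_eq_zero fun p _ => ?_
    rcases h p with ⟨u, hu⟩ | hsum
    · rw [prod_eq_zero (mem_univ u) hu, zero_mul]
    · rw [hsum, mul_zero]
  rw [hzero] at hexpand
  exact (mul_eq_zero.mp hexpand).resolve_left (by positivity)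

end Walsh

section Mask

variable {K ℓ m : ℕ}

theorem mask_update_of_eq (x : Fin m → (Fin K → Fin ℓ) → Bool) (S : Fin K → Fin m → Fin ℓ)
    {α : Fin m} {c : Fin K → Fin ℓ} (hc : (fun i => S i α) = c) (b : Bool) :
    mask (Function.update x α (Function.update (x α) c b)) S = Function.update (mask x S) α b := by
  funext β
  rcases eq_or_ne β α with rfl | hβ
  · simp [mask, hc]
  · simp [mask, hβ]

theorem mask_update_of_ne (x : Fin m → (Fin K → Fin ℓ) → Bool) (S : Fin K → Fin m → Fin ℓ)
    {α : Fin m} {c : Fin K → Fin ℓ} (hc : (fun i => S i α) ≠ c) (b : Bool) :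
    mask (Function.update x α (Function.update (x α) c b)) S = mask x S := by
  funext β
  rcases eq_or_ne β α with rfl | hβ
  · simp [mask, hc]
  · simp [mask, hβ]

/-- Flipping the bit of `x` in block `α` at the cell read by `S u₀` negates the product: it
changes the `α`-th bit of `x ← S u₀`, which lies in `p u₀`, and no other `x ← S u`. -/
theorem sum_prod_chiChar_mask_eq_zero {ι : Type*} [Fintype ι] [DecidableEq ι]
    (S : ι → Fin K → Fin m → Fin ℓ) (p : ι → Finset (Fin m)) {u₀ : ι} {α : Fin m}
    (hα : α ∈ p u₀) (hsep : ∀ u ≠ u₀, (fun i => S u i α) ≠ (fun i => S u₀ i α)) :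
    ∑ x, ∏ u, chiChar (p u) (mask x (S u)) = 0 := by
  set c : Fin K → Fin ℓ := fun i => S u₀ i α
  set flip : (Fin m → (Fin K → Fin ℓ) → Bool) → Fin m → (Fin K → Fin ℓ) → Bool :=
    fun x => Function.update x α (Function.update (x α) c (!x α c))
  have hflip_neg : ∀ x, ∏ u, chiChar (p u) (mask (flip x) (S u)) =
      -∏ u, chiChar (p u) (mask x (S u)) := by
    intro x
    rw [← mul_prod_erase _ _ (mem_univ u₀), ← mul_prod_erase _ _ (mem_univ u₀),
      prod_congr rfl fun u hu => by rw [mask_update_of_ne x _ (hsep u (ne_of_mem_erase hu))],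
      mask_update_of_eq x _ rfl, show x α c = mask x (S u₀) α from rfl,
      chiChar_update_not hα, neg_mul]
  refine sum_ninvolution flip (fun x => by rw [hflip_neg, add_neg_cancel]) (fun x _ h => ?_)
    (fun _ => mem_univ _) (fun x => ?_)
  · have := congrFun (congrFun h α) c
    simp [flip] at this
  · funext β
    rcases eq_or_ne β α with rfl | hβ
    · funext c'
      rcases eq_or_ne c' c with rfl | hc'
      · simp [flip]
      · simp [flip, hc']
    · simp [flip, hβ]

end Mask

theorem exists_mem_forall_ne_of_sum_card_lt {K ℓ m : ℕ} (S0 S1 : Fin K → Fin m → Fin ℓ)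
    {T : Finset (Fin m)}
    (hT : ∑ i, (univ.filter fun α => S0 i α = S1 i α).card < T.card) :
    ∃ α ∈ T, ∀ i, S0 i α ≠ S1 i α := by
  by_contra! h
  have hsub : T ⊆ univ.biUnion fun i => univ.filter fun α => S0 i α = S1 i α := by
    intro α hα
    obtain ⟨i, hi⟩ := h α hα
    exact mem_biUnion.mpr ⟨i, mem_univ i, mem_filter.mpr ⟨mem_univ α, hi⟩⟩
  exact (card_le_card hsub |>.trans card_biUnion_le).not_gt hT

theorem statement7_general (k ℓ m d : ℕ)
    (μ : (Fin m → Bool) → ℝ)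
    (f : (Fin m → Bool) → ℝ)
    (horth : Orthogonal μ d f)
    (S0 S1 : Fin (k - 1) → Fin m → Fin ℓ)
    (r : ℕ)
    (hr : r = ∑ i : Fin (k - 1),
      (Finset.univ.filter (fun α : Fin m => S0 i α = S1 i α)).card)
    (hrd : r < d) :
    Hfun k ℓ m f μ S0 S1 = 0 := by
  set sel : (Fin (k - 1) → Bool) → Fin (k - 1) → Fin m → Fin ℓ :=
    fun u i => if u i then S1 i else S0 i
  have hsum : ∑ x, ∏ u, μ (mask x (sel u)) * f (mask x (sel u)) = 0 := by
    refine sum_prod_eq_zero_of_walshCoeff (fun z => μ z * f z) (fun u x => mask x (sel u))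
      fun p => ?_
    by_cases hlow : ∃ u, (p u).card < d
    · obtain ⟨u, hu⟩ := hlow
      exact .inl ⟨u, horth _ hu⟩
    push Not at hlow
    obtain ⟨α, hα, hne⟩ :=
      exists_mem_forall_ne_of_sum_card_lt S0 S1 ((hr ▸ hrd).trans_le (hlow fun _ => false))
    refine .inr (sum_prod_chiChar_mask_eq_zero sel p hα fun u hu heq => ?_)
    obtain ⟨i, hi⟩ : ∃ i, u i = true := by simpa [Function.ne_iff] using hu
    exact hne i (by simpa [sel, hi] using (congrFun heq i).symm)
  simp_rw [Hfun, mul_comm (f _)]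
  rw [hsum, zero_div, abs_zero]

/-- Claim 1: if `f` is `(μ,d)`-orthogonal and `r < d`, where
`r_i = |{α : S^i_0[α] = S^i_1[α]}|` and `r = r_1 + ⋯ + r_{k-1}`, then
`H^f_k(S^1_0,…,S^{k-1}_1) = 0`. -/
theorem statement7 (k ℓ m d : ℕ) (hk : 2 ≤ k) (hℓ : 1 ≤ ℓ) (hm : 1 ≤ m) (hd : 1 ≤ d)
    (n : ℕ) (hn : n = ℓ ^ (k - 1) * m)
    (μ : (Fin m → Bool) → ℝ) (hμ : IsProbDist μ)
    (f : (Fin m → Bool) → ℝ) (hf : ∀ z, f z = 1 ∨ f z = -1)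
    (horth : Orthogonal μ d f)
    (S0 S1 : Fin (k - 1) → Fin m → Fin ℓ)
    (r : ℕ)
    (hr : r = ∑ i : Fin (k - 1),
      (Finset.univ.filter (fun α : Fin m => S0 i α = S1 i α)).card)
    (hrd : r < d) :
    Hfun k ℓ m f μ S0 S1 = 0 :=
  statement7_general k ℓ m d μ f horth S0 S1 r hr hrd
end

section
/- Let k ≥ 2, ℓ, m ≥ 1 be integers, n = ℓ^{k−1}m, let μ be a probability distribution on {0,1}^m, and let λ be the probability distribution on {0,1}^n × ([ℓ]^m)^{k−1} given by λ(x, S^1,…,S^{k−1}) = μ(x ← S^1,…,S^{k−1})/(ℓ^{m(k−1)} 2^{n−m}). Then for any f, g : {0,1}^m → {−1,1}, Corr_λ(F^f_k, F^g_k) = Corr_μ(f, g). -/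
open scoped BigOperators

/-! For fixed `S`, the map `x ↦ x ← S` reads one coordinate of each block, so it is a
coordinate projection of `{0,1}^n` onto `{0,1}^m` and every `z` has exactly `2^{n-m}`
preimages. Summing over `x` therefore multiplies `Corr_μ(f, g)` by `2^{n-m}`, and summing over
the `ℓ^{m(k-1)}` choices of `S` cancels the rest of the normalisation of `λ`. -/

open Finset

theorem Fintype.sum_comp_evalAt {ι β M : Type*} {A : ι → Type*} [Fintype ι] [DecidableEq ι]
    [Fintype β] [DecidableEq β] [∀ i, Fintype (A i)] [∀ i, DecidableEq (A i)]
    [AddCommMonoid M] (q : ∀ i, A i) (h : (ι → β) → M) :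
    ∑ x : ∀ i, A i → β, h (fun i => x i (q i)) =
      (∏ i, Fintype.card β ^ (Fintype.card (A i) - 1)) • ∑ z, h z := by
  let e := (Equiv.piCongrRight fun i => Equiv.funSplitAt (q i) β).trans
    (Equiv.arrowProdEquivProdArrow ι _ _)
  have he : ∀ p, (fun i => e.symm p i (q i)) = p.1 := fun p => by
    funext i; simp [e]
  rw [← e.symm.sum_comp, Fintype.sum_prod_type_right]
  simp only [he, sum_const, card_univ, Fintype.card_pi, prod_const,
    Fintype.card_subtype_compl, Fintype.card_subtype_eq]

theorem sum_comp_mask {K ℓ m : ℕ} {M : Type*} [AddCommMonoid M]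
    (S : Fin K → Fin m → Fin ℓ) (h : (Fin m → Bool) → M) :
    ∑ x, h (mask x S) = 2 ^ (m * (ℓ ^ K - 1)) • ∑ z, h z := by
  exact (Fintype.sum_comp_evalAt (fun α i => S i α) h).trans (by simp [pow_mul'])

theorem sum_lamDist_mul (k ℓ m n : ℕ) (hℓ : 0 < ℓ) (hn : n = ℓ ^ (k - 1) * m)
    (μ h : (Fin m → Bool) → ℝ) :
    ∑ p, lamDist k ℓ m n μ p * h (mask p.1 p.2) = ∑ z, μ z * h z := by
  have hnm : n - m = m * (ℓ ^ (k - 1) - 1) := by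
    rw [hn, Nat.mul_sub, Nat.mul_one, Nat.mul_comm]
  have hS : (Fintype.card (Fin (k - 1) → Fin m → Fin ℓ) : ℝ) = (ℓ : ℝ) ^ (m * (k - 1)) := by
    simp [← pow_mul]
  have hℓ' : (0 : ℝ) < ℓ := by exact_mod_cast hℓ
  simp only [lamDist, div_mul_eq_mul_div, ← sum_div]
  rw [Fintype.sum_prod_type_right]
  simp only [sum_comp_mask (h := fun z => μ z * h z), sum_const, card_univ,
    nsmul_eq_mul, hS, hnm]
  push_cast
  field_simp

theorem statement10_general (k ℓ m : ℕ) (hℓ : 1 ≤ ℓ)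
    (n : ℕ) (hn : n = ℓ ^ (k - 1) * m)
    (μ : (Fin m → Bool) → ℝ)
    (f g : (Fin m → Bool) → ℝ) :
    ∑ p : (Fin m → (Fin (k - 1) → Fin ℓ) → Bool) × (Fin (k - 1) → Fin m → Fin ℓ),
        lamDist k ℓ m n μ p * Ffun f p * Ffun g p =
      ∑ z : Fin m → Bool, μ z * f z * g z := by
  simpa only [Ffun, mul_assoc] using sum_lamDist_mul k ℓ m n hℓ hn μ (fun z => f z * g z)

/-- `Corr_λ(F^f_k, F^g_k) = Corr_μ(f, g)`, where
`λ(x,S) = μ(x ← S)/(ℓ^{m(k-1)} 2^{n-m})`. -/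
theorem statement10 (k ℓ m : ℕ) (hk : 2 ≤ k) (hℓ : 1 ≤ ℓ) (hm : 1 ≤ m)
    (n : ℕ) (hn : n = ℓ ^ (k - 1) * m)
    (μ : (Fin m → Bool) → ℝ) (hμ : IsProbDist μ)
    (f g : (Fin m → Bool) → ℝ)
    (hf : ∀ z, f z = 1 ∨ f z = -1) (hg : ∀ z, g z = 1 ∨ g z = -1) :
    ∑ p : (Fin m → (Fin (k - 1) → Fin ℓ) → Bool) × (Fin (k - 1) → Fin m → Fin ℓ),
        lamDist k ℓ m n μ p * Ffun f p * Ffun g p =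
      ∑ z : Fin m → Bool, μ z * f z * g z :=
  statement10_general k ℓ m hℓ n hn μ f g
end

section
/- Let k ≥ 2, ℓ, m ≥ 1 be integers, n = ℓ^{k−1}m, f : {0,1}^m → {−1,1}, μ a probability distribution on {0,1}^m, and fix S^1_0, S^1_1, …, S^{k−1}_0, S^{k−1}_1 ∈ [ℓ]^m. Define G : {0,1}^m → ℝ by G(z) = E[ ∏_{u∈{0,1}^{k−1}, u≠0^{k−1}} f(x ← S^1_{u_1},…,S^{k−1}_{u_{k−1}}) · μ(x ← S^1_{u_1},…,S^{k−1}_{u_{k−1}}) ], where the expectation is over x drawn uniformly from {0,1}^n conditioned on x ← S^1_0,…,S^{k−1}_0 = z. Let T = {α ∈ [m] : S^i_0[α] = S^i_1[α] for some i ∈ [k−1]}. Then G(z) = G(z') whenever z and z' agree on all coordinates in T; moreover |T| ≤ r, where r = Σ_{i=1}^{k−1} |{α ∈ [m] : S^i_0[α] = S^i_1[α]}|. In particular, G depends on at most r of the m input coordinates. -/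
/-!
Outside `T`, the cell `x[α][S^1_0[α],…,S^{k-1}_0[α]]` that `z = x ← S_0` reads is never read by
any of the masks `x ← S_u` with `u ≠ 0`: some `u_i = 1`, and `S^i_1[α] ≠ S^i_0[α]` for `α ∉ T`.
Overwriting these cells with the bits of `z'` is therefore a bijection from the `x` with
`x ← S_0 = z` onto those with `x ← S_0 = z'` which leaves every factor of the product unchanged,
as long as `z` and `z'` agree on `T`.
-/

open scoped BigOperators

/-- `G(z)`: the expectation, over `x` drawn uniformly from `{0,1}^n` conditioned on
`x ← S^1_0,…,S^{k-1}_0 = z`, of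
`∏_{u ∈ {0,1}^{k-1}, u ≠ 0^{k-1}} f(x ← S^1_{u_1},…,S^{k-1}_{u_{k-1}}) μ(x ← S^1_{u_1},…,S^{k-1}_{u_{k-1}})`. -/
noncomputable def Gcond (k ℓ m : ℕ) (f μ : (Fin m → Bool) → ℝ)
    (S0 S1 : Fin (k - 1) → Fin m → Fin ℓ) (z : Fin m → Bool) : ℝ :=
  (∑ x ∈ Finset.univ.filter
      (fun x : Fin m → (Fin (k - 1) → Fin ℓ) → Bool => mask x S0 = z),
    ∏ u ∈ Finset.univ.filter
      (fun u : Fin (k - 1) → Bool => u ≠ fun _ => false),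
      f (mask x (fun i => if u i then S1 i else S0 i)) *
        μ (mask x (fun i => if u i then S1 i else S0 i))) /
  ((Finset.univ.filter
      (fun x : Fin m → (Fin (k - 1) → Fin ℓ) → Bool => mask x S0 = z)).card : ℝ)

open Finset

section SetMaskOutside

variable {K ℓ m : ℕ}

def setMaskOutside (T : Finset (Fin m)) (S : Fin K → Fin m → Fin ℓ) (w : Fin m → Bool)
    (x : Fin m → (Fin K → Fin ℓ) → Bool) : Fin m → (Fin K → Fin ℓ) → Bool :=
  fun α v => if α ∉ T ∧ v = (fun i => S i α) then w α else x α v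

variable {T : Finset (Fin m)} {S : Fin K → Fin m → Fin ℓ}

lemma mask_setMaskOutside_of_eqOn {w : Fin m → Bool} {x : Fin m → (Fin K → Fin ℓ) → Bool}
    (h : ∀ α ∈ T, mask x S α = w α) : mask (setMaskOutside T S w x) S = w := by
  funext α
  by_cases hα : α ∈ T
  · simpa [mask, setMaskOutside, hα] using h α hα
  · simp [mask, setMaskOutside, hα]

lemma setMaskOutside_setMaskOutside (w w' : Fin m → Bool)
    (x : Fin m → (Fin K → Fin ℓ) → Bool) :
    setMaskOutside T S w (setMaskOutside T S w' x) = setMaskOutside T S w x := by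
  funext α v
  simp only [setMaskOutside]
  split_ifs <;> rfl

lemma setMaskOutside_mask_self (x : Fin m → (Fin K → Fin ℓ) → Bool) :
    setMaskOutside T S (mask x S) x = x := by
  funext α v
  simp only [setMaskOutside, mask]
  split_ifs with h
  · rw [h.2]
  · rfl

lemma mask_setMaskOutside_of_ne {S' : Fin K → Fin m → Fin ℓ}
    (hS' : ∀ α ∉ T, (fun i => S' i α) ≠ (fun i => S i α)) (w : Fin m → Bool)
    (x : Fin m → (Fin K → Fin ℓ) → Bool) :
    mask (setMaskOutside T S w x) S' = mask x S' := by
  funext α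
  by_cases hα : α ∈ T
  · simp [mask, setMaskOutside, hα]
  · simp [mask, setMaskOutside, hα, hS' α hα]

lemma sum_filter_mask_eq_of_eqOn {β : Type*} [AddCommMonoid β]
    (F : (Fin m → (Fin K → Fin ℓ) → Bool) → β)
    (hF : ∀ w x, F (setMaskOutside T S w x) = F x)
    {z z' : Fin m → Bool} (hzz' : ∀ α ∈ T, z α = z' α) :
    ∑ x ∈ univ.filter (fun x => mask x S = z), F x =
      ∑ x ∈ univ.filter (fun x => mask x S = z'), F x := by
  have hinv : ∀ w {x : Fin m → (Fin K → Fin ℓ) → Bool},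
      setMaskOutside T S (mask x S) (setMaskOutside T S w x) = x := fun w x => by
    rw [setMaskOutside_setMaskOutside, setMaskOutside_mask_self]
  refine sum_bij' (fun x _ => setMaskOutside T S z' x) (fun x _ => setMaskOutside T S z x)
    ?_ ?_ ?_ ?_ (fun x _ => (hF z' x).symm)
  · simp only [mem_filter, mem_univ, true_and]
    rintro x rfl
    exact mask_setMaskOutside_of_eqOn hzz'
  · simp only [mem_filter, mem_univ, true_and]
    rintro x rfl
    exact mask_setMaskOutside_of_eqOn fun α hα => (hzz' α hα).symm
  · simp only [mem_filter, mem_univ, true_and]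
    rintro x rfl
    exact hinv z'
  · simp only [mem_filter, mem_univ, true_and]
    rintro x rfl
    exact hinv z

lemma card_filter_mask_eq_of_eqOn {z z' : Fin m → Bool} (hzz' : ∀ α ∈ T, z α = z' α) :
    #(univ.filter fun x : Fin m → (Fin K → Fin ℓ) → Bool => mask x S = z) =
      #(univ.filter fun x : Fin m → (Fin K → Fin ℓ) → Bool => mask x S = z') := by
  simpa only [card_eq_sum_ones] using
    sum_filter_mask_eq_of_eqOn (T := T) (S := S) (fun _ => 1) (fun _ _ => rfl) hzz'

end SetMaskOutside

lemma select_ne_of_forall_ne {K ℓ m : ℕ} {S0 S1 : Fin K → Fin m → Fin ℓ} {α : Fin m}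
    (hα : ∀ i, S0 i α ≠ S1 i α) {u : Fin K → Bool} (hu : u ≠ fun _ => false) :
    (fun i => (if u i then S1 i else S0 i) α) ≠ (fun i => S0 i α) := by
  obtain ⟨i, hi⟩ : ∃ i, u i = true := by
    by_contra! h
    exact hu (funext fun i => by simpa using h i)
  intro h
  have hS := congrFun h i
  simp only [hi, if_true] at hS
  exact hα i hS.symm

lemma Gcond_eq_of_eqOn {k ℓ m : ℕ} (f μ : (Fin m → Bool) → ℝ)
    (S0 S1 : Fin (k - 1) → Fin m → Fin ℓ) {z z' : Fin m → Bool}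
    (hzz' : ∀ α ∈ univ.filter (fun α => ∃ i, S0 i α = S1 i α), z α = z' α) :
    Gcond k ℓ m f μ S0 S1 z = Gcond k ℓ m f μ S0 S1 z' := by
  have hmask : ∀ u : Fin (k - 1) → Bool, u ≠ (fun _ => false) → ∀ w x,
      mask (setMaskOutside (univ.filter fun α => ∃ i, S0 i α = S1 i α) S0 w x)
        (fun i => if u i then S1 i else S0 i) = mask x (fun i => if u i then S1 i else S0 i) :=
    fun u hu => mask_setMaskOutside_of_ne fun α hα =>
      select_ne_of_forall_ne (by simpa using hα) hu
  unfold Gcond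
  rw [card_filter_mask_eq_of_eqOn hzz']
  congr 1
  refine sum_filter_mask_eq_of_eqOn _ (fun w x => ?_) hzz'
  exact prod_congr rfl fun u hu => by rw [hmask u (mem_filter.mp hu).2]

lemma card_filter_exists_le_sum {ι κ : Type*} [Fintype κ] [DecidableEq ι] (s : Finset ι)
    (p : κ → ι → Prop) [∀ i, DecidablePred (p i)] [DecidablePred fun a => ∃ i, p i a] :
    #(s.filter fun a => ∃ i, p i a) ≤ ∑ i, #(s.filter (p i)) := by
  have : s.filter (fun a => ∃ i, p i a) = univ.biUnion fun i => s.filter (p i) := by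
    ext a
    simp [and_comm]
  rw [this]
  exact card_biUnion_le

theorem statement15_general (k ℓ m : ℕ)
    (f : (Fin m → Bool) → ℝ)
    (μ : (Fin m → Bool) → ℝ)
    (S0 S1 : Fin (k - 1) → Fin m → Fin ℓ)
    (T : Finset (Fin m))
    (hT : T = Finset.univ.filter (fun α : Fin m => ∃ i, S0 i α = S1 i α))
    (r : ℕ)
    (hr : r = ∑ i : Fin (k - 1),
      (Finset.univ.filter (fun α : Fin m => S0 i α = S1 i α)).card) :
    (∀ z z' : Fin m → Bool, (∀ α ∈ T, z α = z' α) →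
        Gcond k ℓ m f μ S0 S1 z = Gcond k ℓ m f μ S0 S1 z') ∧
    T.card ≤ r := by
  subst hT hr
  exact ⟨fun z z' hzz' => Gcond_eq_of_eqOn f μ S0 S1 hzz', card_filter_exists_le_sum _ _⟩

/-- With `T = {α : S^i_0[α] = S^i_1[α] for some i}`, the conditional expectation `G`
satisfies `G(z) = G(z')` whenever `z, z'` agree on `T`; moreover `|T| ≤ r`, where
`r = Σ_i |{α : S^i_0[α] = S^i_1[α]}|`. In particular `G` depends on at most `r` of its
`m` input coordinates. -/
theorem statement15 (k ℓ m : ℕ) (hk : 2 ≤ k) (hℓ : 1 ≤ ℓ) (hm : 1 ≤ m)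
    (n : ℕ) (hn : n = ℓ ^ (k - 1) * m)
    (f : (Fin m → Bool) → ℝ) (hf : ∀ z, f z = 1 ∨ f z = -1)
    (μ : (Fin m → Bool) → ℝ) (hμ : IsProbDist μ)
    (S0 S1 : Fin (k - 1) → Fin m → Fin ℓ)
    (T : Finset (Fin m))
    (hT : T = Finset.univ.filter (fun α : Fin m => ∃ i, S0 i α = S1 i α))
    (r : ℕ)
    (hr : r = ∑ i : Fin (k - 1),
      (Finset.univ.filter (fun α : Fin m => S0 i α = S1 i α)).card) :
    (∀ z z' : Fin m → Bool, (∀ α ∈ T, z α = z' α) →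
        Gcond k ℓ m f μ S0 S1 z = Gcond k ℓ m f μ S0 S1 z') ∧
    T.card ≤ r :=
  statement15_general k ℓ m f μ S0 S1 T hT r hr
end
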